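/- arXiv:1711.02573 — 5 statements merged into one kernel-verified Lean document; each statement's English description precedes it below -/
import Mathlib

section
/- Suppose ψ₁, ψ₂ : ℝ² → ℝ are continuous and satisfy, for all nonnegative integrable f⁺, f⁻ and a fixed nonnegative rate λ(m,c) (not identically zero) and stock price S > 0: ∫∫ λ f⁻ (ψ₁(S,0) − ψ₂(m,c)) dm dc + ∫∫ λ f⁺ (ψ₂(S,0) − ψ₁(m,c)) dm dc = 0. Then ψ₁ and ψ₂ are constant on the support of λ, with ψ₂(m,c) = ψ₁(S,0) and ψ₁(m,c) = ψ₂(S,0) for all (m,c) with λ(m,c) > 0. -/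
open MeasureTheory

/-! Testing the collision identity against densities supported on one population only shows that
`∫ f · λ (ψ₁(S,0) − ψ₂) = 0` and `∫ f · λ (ψ₂(S,0) − ψ₁) = 0` for every nonnegative integrable `f`.
A continuous function `G` with `∫ f G ≤ 0` for all such `f` is nonpositive: otherwise
`f = φ · max G 0`, for a compactly supported bump `φ` at a point where `G > 0`, makes the integrand
`φ · (max G 0)²` continuous, nonnegative and nonzero, so its integral is positive. Hence both
`λ (ψ₁(S,0) − ψ₂)` and `λ (ψ₂(S,0) − ψ₁)` vanish identically, and we divide by `λ` where it is
positive. -/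

section TestFunctions

variable {X : Type*} [TopologicalSpace X] [RegularSpace X] [LocallyCompactSpace X]
  [MeasurableSpace X] [OpensMeasurableSpace X] {μ : Measure X} [μ.IsOpenPosMeasure]
  [IsFiniteMeasureOnCompacts μ] {G : X → ℝ}

theorem Continuous.nonpos_of_forall_integral_mul_nonpos (hG : Continuous G)
    (h : ∀ f : X → ℝ, 0 ≤ f → Integrable f μ → ∫ y, f y * G y ∂μ ≤ 0) : G ≤ 0 := by
  intro x
  change G x ≤ 0
  by_contra! hx
  obtain ⟨φ, hφ_supp, hφ_nonneg, hφx⟩ := exists_continuous_nonneg_pos x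
  set f : X → ℝ := fun y => φ y * max (G y) 0
  have hf_cont : Continuous f := φ.continuous.mul (hG.max continuous_const)
  have hf_supp : HasCompactSupport f := hφ_supp.mul_right
  have hfG_nonneg : 0 ≤ fun y => f y * G y := fun y => by
    rcases le_total (G y) 0 with hy | hy
    · simp [f, max_eq_right hy]
    · simp only [f, max_eq_left hy]
      exact mul_nonneg (mul_nonneg (hφ_nonneg y) hy) hy
  have hfG_pos : 0 < ∫ y, f y * G y ∂μ :=
    integral_pos_of_integrable_nonneg_nonzero (x := x) (hf_cont.mul hG)
      ((hf_cont.mul hG).integrable_of_hasCompactSupport hf_supp.mul_right) hfG_nonneg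
      (by simp [f, max_eq_left hx.le, hφx, hx.ne'])
  exact (h f (fun y => mul_nonneg (hφ_nonneg y) (le_max_right _ _))
    (hf_cont.integrable_of_hasCompactSupport hf_supp)).not_gt hfG_pos

theorem Continuous.eq_zero_of_forall_integral_mul_eq_zero (hG : Continuous G)
    (h : ∀ f : X → ℝ, 0 ≤ f → Integrable f μ → ∫ y, f y * G y ∂μ = 0) : G = 0 := by
  have hle : G ≤ 0 :=
    hG.nonpos_of_forall_integral_mul_nonpos (μ := μ) fun f hf hfi => (h f hf hfi).le
  have hge : -G ≤ 0 := hG.neg.nonpos_of_forall_integral_mul_nonpos (μ := μ) fun f hf hfi => by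
    simp only [Pi.neg_apply, mul_neg, integral_neg, h f hf hfi, neg_zero, le_refl]
  exact le_antisymm hle (neg_nonpos.mp hge)

end TestFunctions

theorem collision_invariant_support_general (ψ₁ ψ₂ lam : ℝ × ℝ → ℝ)
    (hψ₁ : Continuous ψ₁) (hψ₂ : Continuous ψ₂)
    (hlam : Continuous lam)
    (S : ℝ)
    (hinv : ∀ fp fm : ℝ × ℝ → ℝ, (∀ x, 0 ≤ fp x) → (∀ x, 0 ≤ fm x) →
      Integrable fp → Integrable fm →
      (∫ x, lam x * fm x * (ψ₁ (S, 0) - ψ₂ x)) +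
      (∫ x, lam x * fp x * (ψ₂ (S, 0) - ψ₁ x)) = 0) :
    ∀ x, 0 < lam x → ψ₂ x = ψ₁ (S, 0) ∧ ψ₁ x = ψ₂ (S, 0) := by
  have hm : (fun y => lam y * (ψ₁ (S, 0) - ψ₂ y)) = 0 :=
    (hlam.mul (continuous_const.sub hψ₂)).eq_zero_of_forall_integral_mul_eq_zero fun f hf hfi => by
      simpa [mul_left_comm, mul_assoc] using hinv 0 f (fun _ => le_rfl) hf (integrable_zero _ _ _) hfi
  have hp : (fun y => lam y * (ψ₂ (S, 0) - ψ₁ y)) = 0 :=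
    (hlam.mul (continuous_const.sub hψ₁)).eq_zero_of_forall_integral_mul_eq_zero fun f hf hfi => by
      simpa [mul_left_comm, mul_assoc] using hinv f 0 hf (fun _ => le_rfl) hfi (integrable_zero _ _ _)
  intro x hx
  have hm_x := congrFun hm x
  have hp_x := congrFun hp x
  simp only [Pi.zero_apply, mul_eq_zero, hx.ne', false_or, sub_eq_zero] at hm_x hp_x
  exact ⟨hm_x.symm, hp_x.symm⟩

/-- If ψ₁, ψ₂ continuous satisfy, for all nonnegative integrable f⁺, f⁻,
∫∫ λ f⁻ (ψ₁(S,0) − ψ₂) + ∫∫ λ f⁺ (ψ₂(S,0) − ψ₁) = 0, then on the support of λ,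
ψ₂(m,c) = ψ₁(S,0) and ψ₁(m,c) = ψ₂(S,0). -/
theorem collision_invariant_support (ψ₁ ψ₂ lam : ℝ × ℝ → ℝ)
    (hψ₁ : Continuous ψ₁) (hψ₂ : Continuous ψ₂)
    (hlam : Continuous lam) (hlam0 : ∀ x, 0 ≤ lam x)
    (hlamne : ∃ x, lam x ≠ 0)
    (S : ℝ) (hS : 0 < S)
    (hinv : ∀ fp fm : ℝ × ℝ → ℝ, (∀ x, 0 ≤ fp x) → (∀ x, 0 ≤ fm x) →
      Integrable fp → Integrable fm →
      (∫ x, lam x * fm x * (ψ₁ (S, 0) - ψ₂ x)) +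
      (∫ x, lam x * fp x * (ψ₂ (S, 0) - ψ₁ x)) = 0) :
    ∀ x, 0 < lam x → ψ₂ x = ψ₁ (S, 0) ∧ ψ₁ x = ψ₂ (S, 0) :=
  collision_invariant_support_general ψ₁ ψ₂ lam hψ₁ hψ₂ hlam S hinv
end

section
/- Let λ : ℝ² → ℝ be nonnegative and continuous with λ > 0 everywhere. Then the only pairs of continuous collision invariants (ψ₁, ψ₂) of the heterogeneous collision operator (i.e., pairs for which ∫∫ ψ₁(m,c)(Q_gain[f⁻] − Q_loss[f⁺]) + ψ₂(m,c)(Q_gain[f⁺] − Q_loss[f⁻]) dm dc = 0 for all nonnegative integrable f⁺, f⁻) are pairs of constant functions ψ₁ ≡ c₁, ψ₂ ≡ c₂ with c₁ = ψ₂(S,0) and c₂ = ψ₁(S,0). -/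
/-!
Taking `f⁻ = 0` (resp. `f⁺ = 0`) decouples the identity into
`ψ₂(S,0) ∫ λ f = ∫ ψ₁ λ f` (resp. with `ψ₁`, `ψ₂` swapped) for every test function `f ≥ 0`.
Testing with indicators of compact sets gives `∫_K (ψ₁ - ψ₂(S,0)) λ = 0` for every compact `K`,
so the continuous function `(ψ₁ - ψ₂(S,0)) λ` vanishes, and `λ > 0` forces `ψ₁ ≡ ψ₂(S,0)`.
-/

open MeasureTheory

theorem integral_mul_indicator_one {X : Type*} [MeasurableSpace X] {μ : Measure X} (g : X → ℝ)
    {K : Set X} (hK : MeasurableSet K) :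
    ∫ x, g x * K.indicator 1 x ∂μ = ∫ x in K, g x ∂μ := by
  rw [← integral_indicator hK]
  congr 1 with x
  by_cases hx : x ∈ K <;> simp [hx]

variable {X : Type*} [TopologicalSpace X] [MeasurableSpace X] [BorelSpace X]
  [SigmaCompactSpace X] [T2Space X] {μ : Measure X} [IsLocallyFiniteMeasure μ]
  [μ.IsOpenPosMeasure]

theorem Continuous.eq_zero_of_forall_setIntegral_isCompact_eq_zero
    {g : X → ℝ} (hg : Continuous g)
    (h : ∀ K, IsCompact K → ∫ x in K, g x ∂μ = 0) : g = 0 :=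
  (hg.ae_eq_iff_eq μ continuous_zero).mp <|
    ae_eq_zero_of_forall_setIntegral_isCompact_eq_zero' (hg.locallyIntegrable) h

theorem eq_const_of_forall_integral_mul_eq
    {ψ w : X → ℝ} (hψ : Continuous ψ) (hw : Continuous w) (hw₀ : ∀ x, w x ≠ 0) {c : ℝ}
    (h : ∀ f : X → ℝ, (∀ x, 0 ≤ f x) → Integrable f μ →
      c * ∫ x, w x * f x ∂μ = ∫ x, ψ x * w x * f x ∂μ) :
    ∀ x, ψ x = c := by
  have hg : Continuous fun x ↦ (ψ x - c) * w x := (hψ.sub continuous_const).mul hw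
  have hzero : (fun x ↦ (ψ x - c) * w x) = 0 := by
    refine hg.eq_zero_of_forall_setIntegral_isCompact_eq_zero (μ := μ) fun K hK ↦ ?_
    have hKm : MeasurableSet K := hK.measurableSet
    have hind : Integrable (K.indicator (1 : X → ℝ)) μ :=
      (integrable_indicator_iff hKm).mpr (integrableOn_const hK.measure_lt_top.ne)
    have htest := h (K.indicator 1) (fun x ↦ Set.indicator_nonneg (fun _ _ ↦ zero_le_one) x) hind
    rw [integral_mul_indicator_one _ hKm, integral_mul_indicator_one _ hKm] at htest
    simp only [sub_mul]
    have hψw : IntegrableOn (fun x ↦ ψ x * w x) K μ :=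
      (hψ.mul hw).continuousOn.integrableOn_compact hK
    have hcw : IntegrableOn (fun x ↦ c * w x) K μ :=
      (continuous_const.mul hw).continuousOn.integrableOn_compact hK
    rw [integral_sub hψw hcw, integral_const_mul, htest, sub_self]
  intro x
  simpa [sub_eq_zero, hw₀ x] using congrFun hzero x

theorem collision_invariants_constant_general (ψ₁ ψ₂ lam : ℝ × ℝ → ℝ)
    (hψ₁ : Continuous ψ₁) (hψ₂ : Continuous ψ₂)
    (hlam : Continuous lam) (hlampos : ∀ x, 0 < lam x)
    (S : ℝ)
    (hinv : ∀ fp fm : ℝ × ℝ → ℝ, (∀ x, 0 ≤ fp x) → (∀ x, 0 ≤ fm x) →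
      Integrable fp → Integrable fm →
      (ψ₁ (S, 0) * ∫ x, lam x * fm x) - (∫ x, ψ₁ x * lam x * fp x) +
      (ψ₂ (S, 0) * ∫ x, lam x * fp x) - (∫ x, ψ₂ x * lam x * fm x) = 0) :
    ∃ c₁ c₂ : ℝ, (∀ x, ψ₁ x = c₁) ∧ (∀ x, ψ₂ x = c₂) ∧
      c₁ = ψ₂ (S, 0) ∧ c₂ = ψ₁ (S, 0) := by
  have hlam₀ x : lam x ≠ 0 := (hlampos x).ne'
  have h₁ : ∀ x, ψ₁ x = ψ₂ (S, 0) := by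
    refine eq_const_of_forall_integral_mul_eq (μ := volume) hψ₁ hlam hlam₀ fun fp hfp hfpi ↦ ?_
    have := hinv fp 0 hfp (fun _ ↦ le_rfl) hfpi (integrable_zero _ _ _)
    simp only [Pi.zero_apply, mul_zero, integral_zero] at this
    linarith
  have h₂ : ∀ x, ψ₂ x = ψ₁ (S, 0) := by
    refine eq_const_of_forall_integral_mul_eq (μ := volume) hψ₂ hlam hlam₀ fun fm hfm hfmi ↦ ?_
    have := hinv 0 fm (fun _ ↦ le_rfl) hfm (integrable_zero _ _ _) hfmi
    simp only [Pi.zero_apply, mul_zero, integral_zero] at this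
    linarith
  exact ⟨_, _, h₁, h₂, rfl, rfl⟩

/-- If λ > 0 everywhere is continuous, then the only continuous collision
invariants (ψ₁, ψ₂) of the heterogeneous collision operator (i.e. pairs with
∫∫ ψ₁ (Q_gain[f⁻] − Q_loss[f⁺]) + ψ₂ (Q_gain[f⁺] − Q_loss[f⁻]) = 0 for all nonnegative
integrable f⁺, f⁻, where ∫∫ ψ Q_gain[f] = ψ(S,0) ∫∫ fλ and Q_loss[f] = fλ) are constants
ψ₁ ≡ c₁, ψ₂ ≡ c₂ with c₁ = ψ₂(S,0) and c₂ = ψ₁(S,0). -/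
theorem collision_invariants_constant (ψ₁ ψ₂ lam : ℝ × ℝ → ℝ)
    (hψ₁ : Continuous ψ₁) (hψ₂ : Continuous ψ₂)
    (hlam : Continuous lam) (hlampos : ∀ x, 0 < lam x)
    (S : ℝ) (hS : 0 < S)
    (hinv : ∀ fp fm : ℝ × ℝ → ℝ, (∀ x, 0 ≤ fp x) → (∀ x, 0 ≤ fm x) →
      Integrable fp → Integrable fm →
      (ψ₁ (S, 0) * ∫ x, lam x * fm x) - (∫ x, ψ₁ x * lam x * fp x) +
      (ψ₂ (S, 0) * ∫ x, lam x * fp x) - (∫ x, ψ₂ x * lam x * fm x) = 0) :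
    ∃ c₁ c₂ : ℝ, (∀ x, ψ₁ x = c₁) ∧ (∀ x, ψ₂ x = c₂) ∧
      c₁ = ψ₂ (S, 0) ∧ c₂ = ψ₁ (S, 0) :=
  collision_invariants_constant_general ψ₁ ψ₂ lam hψ₁ hψ₂ hlam hlampos S hinv
end

section
/- Let (g⁺, g⁻) be a steady state of the space-homogeneous model with constant stock price s₀, i.e., Q_gain^h[g⁻] − Q_loss^h[g⁺] = 0 and Q_gain^h[g⁺] − Q_loss^h[g⁻] = 0. If g⁺ and g⁻ are nonnegative measures, then ∫ λ_h(m,s₀) g⁺(dm) = ∫ λ_h(m,s₀) g⁻(dm), and if moreover λ_h(s₀,s₀) = 0 then both g⁺ and g⁻ are supported in {m : λ_h(m,s₀) = 0}. -/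
open MeasureTheory

/-!
Testing a steady-state equation against `φ = 1` gives the equality of the two total
rates. When `λ_h(s₀, s₀) = 0`, the bounded continuous test function `φ = λ / (1 + λ²)` vanishes
at `s₀`, so each equation reduces to `∫ λ² / (1 + λ²) dg = 0`; the integrand is nonnegative and
vanishes exactly where `λ` does, so `g` is carried by `{λ = 0}`.
-/

lemma abs_div_one_add_sq_le_one (a : ℝ) : |a / (1 + a ^ 2)| ≤ 1 := by
  have hpos : 0 < 1 + a ^ 2 := by positivity
  rw [abs_div, abs_of_pos hpos, div_le_one hpos]
  nlinarith [sq_nonneg (|a| - 1), sq_abs a]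

lemma measure_ne_zero_eq_zero_of_integral_div_one_add_sq_mul_eq_zero {X : Type*}
    [MeasurableSpace X] {μ : Measure X} [IsFiniteMeasure μ] {f : X → ℝ}
    (hf : Measurable f) (h : ∫ x, f x / (1 + f x ^ 2) * f x ∂μ = 0) :
    μ {x | f x ≠ 0} = 0 := by
  have hnonneg : ∀ x, 0 ≤ f x / (1 + f x ^ 2) * f x := fun x => by
    rw [div_mul_eq_mul_div, ← sq]
    positivity
  have hint : Integrable (fun x => f x / (1 + f x ^ 2) * f x) μ := by
    refine Integrable.of_bound (by fun_prop) 1 (ae_of_all _ fun x => ?_)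
    rw [Real.norm_eq_abs, abs_of_nonneg (hnonneg x), div_mul_eq_mul_div, ← sq,
      div_le_one (by positivity)]
    linarith
  have hzero : ∀ᵐ x ∂μ, f x = 0 := by
    filter_upwards [(integral_eq_zero_iff_of_nonneg hnonneg hint).mp h] with x hx
    have hpos : 0 < 1 + f x ^ 2 := by positivity
    simpa [div_mul_eq_mul_div, hpos.ne'] using hx
  exact ae_iff.mp hzero

theorem homogeneous_steady_state_general (s₀ : ℝ)
    (lam : ℝ → ℝ) (hlamc : Continuous lam)
    (gp gm : Measure ℝ) [IsFiniteMeasure gp] [IsFiniteMeasure gm]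
    (hsteady₁ : ∀ φ : ℝ → ℝ, Continuous φ → (∃ C, ∀ m, |φ m| ≤ C) →
      φ s₀ * (∫ m, lam m ∂gm) - (∫ m, φ m * lam m ∂gp) = 0)
    (hsteady₂ : ∀ φ : ℝ → ℝ, Continuous φ → (∃ C, ∀ m, |φ m| ≤ C) →
      φ s₀ * (∫ m, lam m ∂gp) - (∫ m, φ m * lam m ∂gm) = 0) :
    (∫ m, lam m ∂gp) = (∫ m, lam m ∂gm) ∧
    (lam s₀ = 0 → gp {m | lam m ≠ 0} = 0 ∧ gm {m | lam m ≠ 0} = 0) := by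
  set φ : ℝ → ℝ := fun m => lam m / (1 + lam m ^ 2)
  have hφ : Continuous φ := hlamc.div (by fun_prop) fun m => by positivity
  have hφ_bdd : ∃ C, ∀ m, |φ m| ≤ C := ⟨1, fun m => abs_div_one_add_sq_le_one (lam m)⟩
  refine ⟨?_, fun hs₀ => ⟨?_, ?_⟩⟩
  · simpa [sub_eq_zero] using hsteady₂ 1 continuous_const ⟨1, by simp⟩
  · refine measure_ne_zero_eq_zero_of_integral_div_one_add_sq_mul_eq_zero hlamc.measurable ?_
    simpa [φ, hs₀] using hsteady₁ φ hφ hφ_bdd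
  · refine measure_ne_zero_eq_zero_of_integral_div_one_add_sq_mul_eq_zero hlamc.measurable ?_
    simpa [φ, hs₀] using hsteady₂ φ hφ hφ_bdd

/-- If (g⁺, g⁻) is a weak steady state of the space-homogeneous model
with constant stock price s₀, i.e. for every continuous bounded test function φ,
φ(s₀)∫λ_h dg⁻ − ∫φ λ_h dg⁺ = 0 and φ(s₀)∫λ_h dg⁺ − ∫φ λ_h dg⁻ = 0, then
∫λ_h dg⁺ = ∫λ_h dg⁻; if moreover λ_h(s₀) = 0 then g⁺ and g⁻ are supported in
{m : λ_h(m) = 0}. -/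
theorem homogeneous_steady_state (s₀ : ℝ) (hs₀ : 0 < s₀)
    (lam : ℝ → ℝ) (hlamc : Continuous lam) (hlam0 : ∀ m, 0 ≤ lam m)
    (gp gm : Measure ℝ) [IsFiniteMeasure gp] [IsFiniteMeasure gm]
    (hsteady₁ : ∀ φ : ℝ → ℝ, Continuous φ → (∃ C, ∀ m, |φ m| ≤ C) →
      φ s₀ * (∫ m, lam m ∂gm) - (∫ m, φ m * lam m ∂gp) = 0)
    (hsteady₂ : ∀ φ : ℝ → ℝ, Continuous φ → (∃ C, ∀ m, |φ m| ≤ C) →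
      φ s₀ * (∫ m, lam m ∂gp) - (∫ m, φ m * lam m ∂gm) = 0) :
    (∫ m, lam m ∂gp) = (∫ m, lam m ∂gm) ∧
    (lam s₀ = 0 → gp {m | lam m ≠ 0} = 0 ∧ gm {m | lam m ≠ 0} = 0) :=
  homogeneous_steady_state_general s₀ lam hlamc gp gm hsteady₁ hsteady₂
end

section
/- Let f⁺_∞, f⁻_∞ be nonnegative integrable steady states of the space-heterogeneous model with constant stock price, normalized so that ∫∫(f⁺_∞ + f⁻_∞) dm dc = 1 and with decay at infinity in c. If ED[f⁺_∞, f⁻_∞] < 0 and H(−ED) > 0, then f⁺_∞ = 0 and ED = −1; symmetrically, if ED > 0 then f⁻_∞ = 0 and ED = 1. Hence the equilibrium excess demand can only take values in {−1, 0, 1}. -/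
/-!
Test the weak equation `v ∂_c f = A δ_(S,0) - λ f` (with `v > 0`) against `ψ(m) χ(c)`, where
`ψ ≥ 0` vanishes at `m = S` so that the source drops out. The loss term has a sign, so the
mollified masses `t ↦ ∫ ψ(m) ρ(c - t) f` are nonincreasing in `t`; by dominated convergence
they tend to `0` as `t → ±∞`, hence vanish identically, and letting `ψ` and `ρ` range over
countable families whose positivity sets cover `{m ≠ S}` gives `f = 0` a.e.
If `ED < 0` the population `f⁺` is transported with positive speed `H(-ED)`, so it vanishes,
and the mass normalization forces `ED = -1`; symmetrically for `ED > 0`.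
-/

open MeasureTheory Filter Topology

noncomputable def cap (t : ℝ) : ℝ := max (t * (1 - t)) 0

lemma continuous_cap : Continuous cap :=
  (continuous_id.mul (continuous_const.sub continuous_id)).max continuous_const

lemma cap_nonneg (t : ℝ) : 0 ≤ cap t := le_max_right _ _

lemma cap_le_one (t : ℝ) : cap t ≤ 1 :=
  max_le (by nlinarith [sq_nonneg (t - 1 / 2)]) zero_le_one

lemma cap_eq_zero {t : ℝ} (h : t ≤ 0 ∨ 1 ≤ t) : cap t = 0 := by
  rcases h with h | h <;> exact max_eq_right (by nlinarith)

lemma cap_pos {t : ℝ} (h0 : 0 < t) (h1 : t < 1) : 0 < cap t :=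
  lt_max_of_lt_left (by nlinarith)

noncomputable def capStep (t : ℝ) : ℝ := ∫ u in (0 : ℝ)..t, cap u

lemma hasDerivAt_capStep (t : ℝ) : HasDerivAt capStep (cap t) t :=
  (continuous_cap.integral_hasStrictDerivAt 0 t).hasDerivAt

lemma deriv_capStep : deriv capStep = cap := funext fun t => (hasDerivAt_capStep t).deriv

lemma differentiable_capStep : Differentiable ℝ capStep :=
  fun t => (hasDerivAt_capStep t).differentiableAt

lemma contDiff_capStep : ContDiff ℝ 1 capStep :=
  contDiff_one_iff_deriv.2 ⟨differentiable_capStep, deriv_capStep ▸ continuous_cap⟩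

lemma monotone_capStep : Monotone capStep :=
  monotone_of_deriv_nonneg differentiable_capStep (by simpa [deriv_capStep] using cap_nonneg)

lemma capStep_eq_zero {t : ℝ} (h : t ≤ 0) : capStep t = 0 := by
  rw [capStep, intervalIntegral.integral_congr (g := fun _ => 0), intervalIntegral.integral_zero]
  intro u hu
  rw [Set.uIcc_of_ge h] at hu
  exact cap_eq_zero (.inl hu.2)

lemma capStep_eq_capStep_one {t : ℝ} (h : 1 ≤ t) : capStep t = capStep 1 := by
  have hsplit : capStep 1 + ∫ u in (1 : ℝ)..t, cap u = capStep t :=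
    intervalIntegral.integral_add_adjacent_intervals
      (continuous_cap.intervalIntegrable _ _) (continuous_cap.intervalIntegrable _ _)
  have htail : ∫ u in (1 : ℝ)..t, cap u = 0 := by
    rw [intervalIntegral.integral_congr (g := fun _ => 0), intervalIntegral.integral_zero]
    intro u hu
    rw [Set.uIcc_of_le h] at hu
    exact cap_eq_zero (.inr hu.1)
  linarith

lemma capStep_pos {t : ℝ} (h : 0 < t) : 0 < capStep t := by
  have hmin : 0 < capStep (min t 1) :=
    intervalIntegral.intervalIntegral_pos_of_pos_on (continuous_cap.intervalIntegrable _ _)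
      (fun u hu => cap_pos hu.1 (hu.2.trans_le (min_le_right _ _))) (lt_min h one_pos)
  exact hmin.trans_le (monotone_capStep (min_le_left _ _))

noncomputable def window (a b t : ℝ) : ℝ := capStep (t - a) - capStep (t - b)

lemma contDiff_window (a b : ℝ) : ContDiff ℝ 1 (window a b) :=
  (contDiff_capStep.comp (contDiff_id.sub contDiff_const)).sub
    (contDiff_capStep.comp (contDiff_id.sub contDiff_const))

lemma hasDerivAt_window (a b t : ℝ) :
    HasDerivAt (window a b) (cap (t - a) - cap (t - b)) t := by
  exact (hasDerivAt_capStep (t - a)).comp_sub_const t a |>.sub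
    ((hasDerivAt_capStep (t - b)).comp_sub_const t b)

lemma window_nonneg {a b : ℝ} (hab : a ≤ b) (t : ℝ) : 0 ≤ window a b t :=
  sub_nonneg.2 (monotone_capStep (by linarith))

lemma window_pos {a b t : ℝ} (ha : a < t) (hb : t ≤ b) : 0 < window a b t := by
  rw [window, capStep_eq_zero (t := t - b) (by linarith), sub_zero]
  exact capStep_pos (by linarith)

lemma window_eq_zero {a b t : ℝ} (hab : a ≤ b) (ht : t ∉ Set.Icc a (b + 1)) :
    window a b t = 0 := by
  rw [Set.mem_Icc, not_and_or, not_le, not_le] at ht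
  rcases ht with ht | ht
  · rw [window, capStep_eq_zero (by linarith), capStep_eq_zero (by linarith), sub_self]
  · rw [window, capStep_eq_capStep_one (by linarith),
      capStep_eq_capStep_one (t := t - b) (by linarith), sub_self]

lemma hasCompactSupport_window {a b : ℝ} (hab : a ≤ b) : HasCompactSupport (window a b) :=
  HasCompactSupport.intro isCompact_Icc fun _ => window_eq_zero hab

/-- Vanishing at `S`, it makes the test functions blind to the source at `(S, 0)`. -/
noncomputable def cutoffAwayFrom (S : ℝ) (m : ℕ) (x : ℝ) : ℝ :=
  window (S - m - 1) (S + m) x * (x - S) ^ 2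

lemma contDiff_cutoffAwayFrom (S : ℝ) (m : ℕ) : ContDiff ℝ 1 (cutoffAwayFrom S m) :=
  (contDiff_window _ _).mul ((contDiff_id.sub contDiff_const).pow 2)

lemma cutoffAwayFrom_nonneg (S : ℝ) (m : ℕ) (x : ℝ) : 0 ≤ cutoffAwayFrom S m x :=
  mul_nonneg (window_nonneg (by linarith [m.cast_nonneg (α := ℝ)]) x) (sq_nonneg _)

lemma cutoffAwayFrom_self (S : ℝ) (m : ℕ) : cutoffAwayFrom S m S = 0 := by
  simp [cutoffAwayFrom]

lemma cutoffAwayFrom_pos {S x : ℝ} {m : ℕ} (hx : x ≠ S) (hm : |x - S| ≤ m) :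
    0 < cutoffAwayFrom S m x := by
  obtain ⟨hlo, hhi⟩ := abs_le.1 hm
  have hxS := sub_ne_zero.2 hx
  exact mul_pos (window_pos (by linarith) (by linarith)) (by positivity)

lemma hasCompactSupport_cutoffAwayFrom (S : ℝ) (m : ℕ) :
    HasCompactSupport (cutoffAwayFrom S m) :=
  (hasCompactSupport_window (by linarith [m.cast_nonneg (α := ℝ)])).mul_right

lemma HasCompactSupport.mul_prod {α β : Type*} [TopologicalSpace α] [TopologicalSpace β]
    {f : α → ℝ} {g : β → ℝ} (hf : HasCompactSupport f) (hg : HasCompactSupport g) :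
    HasCompactSupport fun y : α × β => f y.1 * g y.2 := by
  refine HasCompactSupport.intro' (hf.prod hg) (isClosed_tsupport f |>.prod (isClosed_tsupport g))
    fun y hy => ?_
  rcases not_and_or.1 (Set.mem_prod.not.1 hy) with h | h
  · rw [image_eq_zero_of_notMem_tsupport h, zero_mul]
  · rw [image_eq_zero_of_notMem_tsupport h, mul_zero]

/-- Weak form of `v ∂_c f = A δ_(S,0) - λ f` on `(m, c) ∈ ℝ × ℝ`. -/
def IsWeakSteadyState (v : ℝ) (f lam : ℝ × ℝ → ℝ) (S A : ℝ) : Prop :=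
  ∀ φ : ℝ → ℝ → ℝ, ContDiff ℝ 1 (fun y : ℝ × ℝ => φ y.1 y.2) →
    HasCompactSupport (fun y : ℝ × ℝ => φ y.1 y.2) →
    (∫ x : ℝ × ℝ, v * f x * deriv (φ x.1) x.2) + φ S 0 * A -
      ∫ x : ℝ × ℝ, φ x.1 x.2 * lam x * f x = 0

noncomputable def localMass (f : ℝ × ℝ → ℝ) (S : ℝ) (m : ℕ) (t : ℝ) : ℝ :=
  ∫ x : ℝ × ℝ, cutoffAwayFrom S m x.1 * cap (x.2 - t) * f x

lemma exists_bound_cutoffAwayFrom_mul_cap (S : ℝ) (m : ℕ) :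
    ∃ C, ∀ (t : ℝ) (x : ℝ × ℝ), ‖cutoffAwayFrom S m x.1 * cap (x.2 - t)‖ ≤ C := by
  obtain ⟨C, hC⟩ := (contDiff_cutoffAwayFrom S m).continuous.bounded_above_of_compact_support
    (hasCompactSupport_cutoffAwayFrom S m)
  refine ⟨C, fun t x => ?_⟩
  rw [norm_mul, Real.norm_of_nonneg (cap_nonneg _)]
  exact (mul_le_of_le_one_right (norm_nonneg _) (cap_le_one _)).trans (hC x.1)

lemma integrable_cutoffAwayFrom_mul_cap_mul {f : ℝ × ℝ → ℝ} (hf : Integrable f) (S : ℝ) (m : ℕ)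
    (t : ℝ) : Integrable fun x : ℝ × ℝ => cutoffAwayFrom S m x.1 * cap (x.2 - t) * f x := by
  obtain ⟨C, hC⟩ := exists_bound_cutoffAwayFrom_mul_cap S m
  refine hf.bdd_mul ?_ (.of_forall (hC t))
  exact (((contDiff_cutoffAwayFrom S m).continuous.comp continuous_fst).mul
    (continuous_cap.comp (continuous_snd.sub continuous_const))).aestronglyMeasurable

lemma tendsto_localMass {f : ℝ × ℝ → ℝ} (hf : Integrable f) (S : ℝ) (m : ℕ) {l : Filter ℝ}
    [l.IsCountablyGenerated] (hl : ∀ c, ∀ᶠ t in l, cap (c - t) = 0) :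
    Tendsto (localMass f S m) l (𝓝 0) := by
  obtain ⟨C, hC⟩ := exists_bound_cutoffAwayFrom_mul_cap S m
  have hlim := tendsto_integral_filter_of_dominated_convergence (μ := volume) (l := l)
    (fun x => C * ‖f x‖) (f := fun _ => 0)
    (.of_forall fun t => (integrable_cutoffAwayFrom_mul_cap_mul hf S m t).aestronglyMeasurable)
    (.of_forall fun t => .of_forall fun x => by
      rw [norm_mul]; exact mul_le_mul_of_nonneg_right (hC t x) (norm_nonneg _))
    (hf.norm.const_mul C)
    (.of_forall fun x => tendsto_const_nhds.congr' <| by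
      filter_upwards [hl x.2] with t ht
      rw [ht, mul_zero, zero_mul])
  rwa [integral_zero] at hlim

lemma antitone_localMass {v A S : ℝ} {f lam : ℝ × ℝ → ℝ} (hv : 0 < v) (hf0 : ∀ x, 0 ≤ f x)
    (hf : Integrable f) (hlam : ∀ x, 0 ≤ lam x) (hst : IsWeakSteadyState v f lam S A) (m : ℕ) :
    Antitone (localMass f S m) := by
  intro a b hab
  let φ : ℝ → ℝ → ℝ := fun x₁ x₂ => cutoffAwayFrom S m x₁ * window a b x₂
  have hderiv (x : ℝ × ℝ) : deriv (φ x.1) x.2 =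
      cutoffAwayFrom S m x.1 * (cap (x.2 - a) - cap (x.2 - b)) :=
    ((hasDerivAt_window a b x.2).const_mul _).deriv
  have htransport : ∫ x : ℝ × ℝ, v * f x * deriv (φ x.1) x.2 =
      v * (localMass f S m a - localMass f S m b) := by
    rw [localMass, localMass, ← integral_sub (integrable_cutoffAwayFrom_mul_cap_mul hf S m a)
      (integrable_cutoffAwayFrom_mul_cap_mul hf S m b), ← integral_const_mul]
    congr 1 with x
    rw [hderiv]; ring
  have hloss : 0 ≤ ∫ x : ℝ × ℝ, φ x.1 x.2 * lam x * f x := integral_nonneg fun x =>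
    mul_nonneg (mul_nonneg (mul_nonneg (cutoffAwayFrom_nonneg S m x.1)
      (window_nonneg hab x.2)) (hlam x)) (hf0 x)
  have hweak := hst φ
    (((contDiff_cutoffAwayFrom S m).comp contDiff_fst).mul ((contDiff_window a b).comp contDiff_snd))
    ((hasCompactSupport_cutoffAwayFrom S m).mul_prod (hasCompactSupport_window hab))
  rw [htransport, show φ S 0 = 0 by simp [φ, cutoffAwayFrom_self], zero_mul, add_zero] at hweak
  nlinarith

lemma localMass_eq_zero {v A S : ℝ} {f lam : ℝ × ℝ → ℝ} (hv : 0 < v) (hf0 : ∀ x, 0 ≤ f x)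
    (hf : Integrable f) (hlam : ∀ x, 0 ≤ lam x) (hst : IsWeakSteadyState v f lam S A) (m : ℕ)
    (t : ℝ) : localMass f S m t = 0 := by
  have hanti := antitone_localMass hv hf0 hf hlam hst m
  have htop : Tendsto (localMass f S m) atTop (𝓝 0) := tendsto_localMass hf S m fun c => by
    filter_upwards [eventually_ge_atTop c] with t ht using cap_eq_zero (.inl (by linarith))
  have hbot : Tendsto (localMass f S m) atBot (𝓝 0) := tendsto_localMass hf S m fun c => by
    filter_upwards [eventually_le_atBot (c - 1)] with t ht using cap_eq_zero (.inr (by linarith))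
  exact le_antisymm (hanti.ge_of_tendsto hbot t) (hanti.le_of_tendsto htop t)

theorem ae_eq_zero_of_isWeakSteadyState {v A S : ℝ} {f lam : ℝ × ℝ → ℝ} (hv : 0 < v)
    (hf0 : ∀ x, 0 ≤ f x) (hf : Integrable f) (hlam : ∀ x, 0 ≤ lam x)
    (hst : IsWeakSteadyState v f lam S A) : ∀ᵐ x : ℝ × ℝ, f x = 0 := by
  have hlocal (m : ℕ) (q : ℚ) :
      ∀ᵐ x : ℝ × ℝ, cutoffAwayFrom S m x.1 * cap (x.2 - q) * f x = 0 := by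
    have hnonneg (x : ℝ × ℝ) : 0 ≤ cutoffAwayFrom S m x.1 * cap (x.2 - q) * f x :=
      mul_nonneg (mul_nonneg (cutoffAwayFrom_nonneg S m x.1) (cap_nonneg _)) (hf0 x)
    have hzero := (integral_eq_zero_iff_of_nonneg hnonneg
      (integrable_cutoffAwayFrom_mul_cap_mul hf S m q)).1 (localMass_eq_zero hv hf0 hf hlam hst m q)
    filter_upwards [hzero] with x hx using hx
  have hoff : ∀ᵐ x : ℝ × ℝ, x.1 ≠ S := by
    rw [Measure.volume_eq_prod]
    exact Measure.quasiMeasurePreserving_fst.ae (Measure.ae_ne volume S)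
  filter_upwards [ae_all_iff.2 fun m => ae_all_iff.2 (hlocal m), hoff] with x hx hxS
  obtain ⟨q, hq₁, hq₂⟩ := exists_rat_btwn (sub_one_lt x.2)
  have hpos : 0 < cutoffAwayFrom S ⌈|x.1 - S|⌉₊ x.1 * cap (x.2 - q) :=
    mul_pos (cutoffAwayFrom_pos hxS (Nat.le_ceil _)) (cap_pos (by linarith) (by linarith))
  exact (mul_eq_zero.1 (hx _ q)).resolve_left hpos.ne'

theorem heterogeneous_equilibrium_excess_demand_general
    (fp fm : ℝ × ℝ → ℝ) (lam : ℝ × ℝ → ℝ) (H : ℝ → ℝ) (S : ℝ)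
    (hHpos : ∀ x : ℝ, 0 < x → 0 < H x)
    (hlam0 : ∀ x, 0 ≤ lam x)
    (hfp0 : ∀ x, 0 ≤ fp x) (hfm0 : ∀ x, 0 ≤ fm x)
    (hfpInt : Integrable fp) (hfmInt : Integrable fm)
    (hmass : (∫ x, (fp x + fm x)) = 1)
    (ED : ℝ) (hED : ED = ∫ x, (fp x - fm x))
    (hsteady₁ : ∀ φ : ℝ → ℝ → ℝ,
      ContDiff ℝ 1 (fun y : ℝ × ℝ => φ y.1 y.2) →
      HasCompactSupport (fun y : ℝ × ℝ => φ y.1 y.2) →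
      (∫ x : ℝ × ℝ, H (-ED) * fp x * deriv (φ x.1) x.2) +
        (φ S 0 * ∫ x : ℝ × ℝ, lam x * fm x) -
        (∫ x : ℝ × ℝ, φ x.1 x.2 * lam x * fp x) = 0)
    (hsteady₂ : ∀ φ : ℝ → ℝ → ℝ,
      ContDiff ℝ 1 (fun y : ℝ × ℝ => φ y.1 y.2) →
      HasCompactSupport (fun y : ℝ × ℝ => φ y.1 y.2) →
      (∫ x : ℝ × ℝ, H ED * fm x * deriv (φ x.1) x.2) +
        (φ S 0 * ∫ x : ℝ × ℝ, lam x * fp x) -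
        (∫ x : ℝ × ℝ, φ x.1 x.2 * lam x * fm x) = 0) :
    (ED < 0 → (∀ᵐ x : ℝ × ℝ, fp x = 0) ∧ ED = -1) ∧
    (0 < ED → (∀ᵐ x : ℝ × ℝ, fm x = 0) ∧ ED = 1) ∧
    (ED = -1 ∨ ED = 0 ∨ ED = 1) := by
  rw [integral_add hfpInt hfmInt] at hmass
  rw [integral_sub hfpInt hfmInt] at hED
  have hneg : ED < 0 → (∀ᵐ x : ℝ × ℝ, fp x = 0) ∧ ED = -1 := fun h => by
    have hfp := ae_eq_zero_of_isWeakSteadyState (hHpos _ (neg_pos.2 h)) hfp0 hfpInt hlam0 hsteady₁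
    have hmass_fp := integral_eq_zero_of_ae hfp
    exact ⟨hfp, by linarith⟩
  have hpos : 0 < ED → (∀ᵐ x : ℝ × ℝ, fm x = 0) ∧ ED = 1 := fun h => by
    have hfm := ae_eq_zero_of_isWeakSteadyState (hHpos _ h) hfm0 hfmInt hlam0 hsteady₂
    have hmass_fm := integral_eq_zero_of_ae hfm
    exact ⟨hfm, by linarith⟩
  refine ⟨hneg, hpos, ?_⟩
  rcases lt_trichotomy ED 0 with h | h | h
  · exact .inl (hneg h).2
  · exact .inr (.inl h)
  · exact .inr (.inr (hpos h).2)

/-- For nonnegative integrable steady states f⁺_∞, f⁻_∞ of the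
space-heterogeneous model (weak formulation against C¹ compactly supported test
functions), normalized with total mass one, the equilibrium excess demand
ED = ∫∫(f⁺_∞ − f⁻_∞) satisfies: if ED < 0 then f⁺_∞ = 0 (a.e.) and ED = −1; if ED > 0
then f⁻_∞ = 0 (a.e.) and ED = 1; hence ED ∈ {−1, 0, 1}. -/
theorem heterogeneous_equilibrium_excess_demand
    (fp fm : ℝ × ℝ → ℝ) (lam : ℝ × ℝ → ℝ) (H : ℝ → ℝ) (S : ℝ) (hS : 0 < S)
    (hH0 : ∀ x : ℝ, x ≤ 0 → H x = 0) (hHpos : ∀ x : ℝ, 0 < x → 0 < H x)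
    (hlam0 : ∀ x, 0 ≤ lam x) (hlamc : Continuous lam)
    (hfp0 : ∀ x, 0 ≤ fp x) (hfm0 : ∀ x, 0 ≤ fm x)
    (hfpInt : Integrable fp) (hfmInt : Integrable fm)
    (hmass : (∫ x, (fp x + fm x)) = 1)
    (ED : ℝ) (hED : ED = ∫ x, (fp x - fm x))
    (hsteady₁ : ∀ φ : ℝ → ℝ → ℝ,
      ContDiff ℝ 1 (fun y : ℝ × ℝ => φ y.1 y.2) →
      HasCompactSupport (fun y : ℝ × ℝ => φ y.1 y.2) →
      (∫ x : ℝ × ℝ, H (-ED) * fp x * deriv (φ x.1) x.2) +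
        (φ S 0 * ∫ x : ℝ × ℝ, lam x * fm x) -
        (∫ x : ℝ × ℝ, φ x.1 x.2 * lam x * fp x) = 0)
    (hsteady₂ : ∀ φ : ℝ → ℝ → ℝ,
      ContDiff ℝ 1 (fun y : ℝ × ℝ => φ y.1 y.2) →
      HasCompactSupport (fun y : ℝ × ℝ => φ y.1 y.2) →
      (∫ x : ℝ × ℝ, H ED * fm x * deriv (φ x.1) x.2) +
        (φ S 0 * ∫ x : ℝ × ℝ, lam x * fp x) -
        (∫ x : ℝ × ℝ, φ x.1 x.2 * lam x * fm x) = 0) :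
    (ED < 0 → (∀ᵐ x : ℝ × ℝ, fp x = 0) ∧ ED = -1) ∧
    (0 < ED → (∀ᵐ x : ℝ × ℝ, fm x = 0) ∧ ED = 1) ∧
    (ED = -1 ∨ ED = 0 ∨ ED = 1) :=
  heterogeneous_equilibrium_excess_demand_general fp fm lam H S hHpos hlam0 hfp0 hfm0 hfpInt hfmInt
    hmass ED hED hsteady₁ hsteady₂
end

section
/- Under the hypotheses of the general relative entropy inequality (homogeneous case), for all t ≥ 0: ∫ [ψ⁺(t)p⁺(t)K(g⁺(t)/p⁺(t)) + ψ⁻(t)p⁻(t)K(g⁻(t)/p⁻(t))] dm ≤ ∫ [ψ⁺(0)p⁺(0)K(g⁺(0)/p⁺(0)) + ψ⁻(0)p⁻(0)K(g⁻(0)/p⁻(0))] dm. -/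
open MeasureTheory

/-- A-priori entropy bound: Under the hypotheses of the general relative
entropy inequality (homogeneous case) — K convex differentiable, p⁺, p⁻, ψ⁺, ψ⁻ > 0,
and the entropy functional E(t) = ∫ψ⁺p⁺K(g⁺/p⁺) + ∫ψ⁻p⁻K(g⁻/p⁻) differentiable in time
with nonpositive derivative (as provided by the entropy inequality theorem) — one has
E(t) ≤ E(0) for all t ≥ 0. -/
theorem entropy_a_priori_bound
    (K : ℝ → ℝ) (hK : ConvexOn ℝ Set.univ K) (hKdiff : Differentiable ℝ K)
    (gp gm pp pm ψp ψm : ℝ → ℝ → ℝ)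
    (hpp : ∀ t m, 0 < pp t m) (hpm : ∀ t m, 0 < pm t m)
    (hψp : ∀ t m, 0 < ψp t m) (hψm : ∀ t m, 0 < ψm t m)
    (E : ℝ → ℝ)
    (hEdef : ∀ t, E t =
      (∫ m, ψp t m * pp t m * K (gp t m / pp t m)) +
      (∫ m, ψm t m * pm t m * K (gm t m / pm t m)))
    (E' : ℝ → ℝ)
    (hE : ∀ t, HasDerivAt E (E' t) t)
    (hE'neg : ∀ t, E' t ≤ 0) :
    ∀ t, 0 ≤ t → E t ≤ E 0 := by
  intro t ht
  have := Antitone.imp (f := E) ?h ht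
  · exact this
  · exact antitone_of_deriv_nonpos (fun x => (hE x).differentiableAt)
      (fun x => by rw [(hE x).deriv]; exact hE'neg x)
end
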